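/- arXiv:1710.02942 — 4 statements merged into one kernel-verified Lean document; each statement's English description precedes it below -/
import Mathlib

section
/- If r : [0,∞) → ℝ is strictly concave, strictly increasing, with r(0) = 0, and P_C > 0, then the energy efficiency function U(p) = r(p)/(P_C + p) is strictly quasiconcave on [0,∞), i.e., for all p₁ ≠ p₂ in [0,∞) and λ ∈ (0,1), U(λp₁ + (1−λ)p₂) > min(U(p₁), U(p₂)). -/
theorem stmt_1 (P_C : ℝ) (hPC : 0 < P_C) (r : ℝ → ℝ)
    (hconc : StrictConcaveOn ℝ (Set.Ici (0:ℝ)) r)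
    (hmono : StrictMonoOn r (Set.Ici (0:ℝ)))
    (hr0 : r 0 = 0)
    (U : ℝ → ℝ) (hU : ∀ p, U p = r p / (P_C + p)) :
    ∀ p₁ ∈ Set.Ici (0:ℝ), ∀ p₂ ∈ Set.Ici (0:ℝ), p₁ ≠ p₂ →
      ∀ l : ℝ, 0 < l → l < 1 →
        U (l * p₁ + (1 - l) * p₂) > min (U p₁) (U p₂) := by
  intro p₁ hp₁ p₂ hp₂ hne l hl hl'
  have hp₁' : (0:ℝ) ≤ p₁ := hp₁
  have hp₂' : (0:ℝ) ≤ p₂ := hp₂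
  have hd1 : 0 < P_C + p₁ := by linarith
  have hd2 : 0 < P_C + p₂ := by linarith
  have hdx : 0 < P_C + (l * p₁ + (1 - l) * p₂) := by nlinarith
  have hkey := hconc.2 hp₁ hp₂ hne hl (by linarith : (0:ℝ) < 1 - l) (by ring)
  simp only [smul_eq_mul] at hkey
  have e1 : r p₁ = U p₁ * (P_C + p₁) := by rw [hU]; field_simp
  have e2 : r p₂ = U p₂ * (P_C + p₂) := by rw [hU]; field_simp
  have hm1 : min (U p₁) (U p₂) * (l * (P_C + p₁)) ≤ l * r p₁ := by
    rw [e1]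
    nlinarith [min_le_left (U p₁) (U p₂), mul_pos hl hd1]
  have hm2 : min (U p₁) (U p₂) * ((1 - l) * (P_C + p₂)) ≤ (1 - l) * r p₂ := by
    rw [e2]
    nlinarith [min_le_right (U p₁) (U p₂), mul_pos (by linarith : (0:ℝ) < 1 - l) hd2]
  rw [hU, gt_iff_lt, lt_div_iff₀ hdx]
  nlinarith [hm1, hm2, hkey]
end

section
/- With f(p) = (P_C + p)·r'(p) − r(p) and r(p) = c·log₂(1 + g·p/(σ² + I)), f(p) tends to −∞ as p → ∞. -/
/-!
Writing `r p = a * log (1 + k p)` with `a = c / log 2` and `k = g / (σ² + I)`, one has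
`(P_C + p) * r' p = a * (P_C + p) k / (1 + k p) → a`, while `r p → ∞`; hence `f p → -∞`.
-/

open Filter Topology Real

lemma tendsto_one_add_mul_atTop {k : ℝ} (hk : 0 < k) :
    Tendsto (fun p => 1 + k * p) atTop atTop :=
  tendsto_atTop_add_const_left _ 1 (tendsto_id.const_mul_atTop hk)

lemma deriv_const_mul_log_one_add_mul (a k p : ℝ) (hp : 1 + k * p ≠ 0) :
    deriv (fun q => a * log (1 + k * q)) p = a * (k / (1 + k * p)) := by
  have hlin : HasDerivAt (fun q => 1 + k * q) k p := by
    simpa using ((hasDerivAt_id p).const_mul k).const_add 1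
  exact ((hlin.log hp).const_mul a).deriv

lemma tendsto_add_mul_div_one_add_mul (P : ℝ) {k : ℝ} (hk : 0 < k) :
    Tendsto (fun p => (P + p) * (k / (1 + k * p))) atTop (𝓝 1) := by
  have hlim := (tendsto_const_nhds (x := k * P - 1)).div_atTop
    (tendsto_one_add_mul_atTop hk) |>.const_add 1
  rw [add_zero] at hlim
  refine hlim.congr' ?_
  filter_upwards [(tendsto_one_add_mul_atTop hk).eventually_gt_atTop 0] with p hp
  field_simp
  ring

lemma tendsto_add_mul_deriv_sub_log_atBot (P : ℝ) {a k : ℝ} (ha : 0 < a) (hk : 0 < k) :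
    Tendsto (fun p => (P + p) * deriv (fun q => a * log (1 + k * q)) p - a * log (1 + k * p))
      atTop atBot := by
  have hlog : Tendsto (fun p => a * log (1 + k * p)) atTop atTop :=
    (tendsto_log_atTop.comp (tendsto_one_add_mul_atTop hk)).const_mul_atTop ha
  refine ((tendsto_add_mul_div_one_add_mul P hk).const_mul a).add_atBot
    (tendsto_neg_atTop_atBot.comp hlog) |>.congr' ?_
  filter_upwards [(tendsto_one_add_mul_atTop hk).eventually_gt_atTop 0] with p hp
  simp only [Function.comp_apply, deriv_const_mul_log_one_add_mul a k p hp.ne']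
  ring

theorem stmt_7_general (c g σ2 I P_C : ℝ) (hc : 0 < c) (hg : 0 < g) (hσ : 0 < σ2) (hI : 0 ≤ I)
    (r : ℝ → ℝ) (hr : ∀ p, r p = c * Real.logb 2 (1 + g * p / (σ2 + I)))
    (f : ℝ → ℝ) (hf : ∀ p, f p = (P_C + p) * deriv r p - r p) :
    Filter.Tendsto f Filter.atTop Filter.atBot := by
  have hr' : r = fun q => c / log 2 * log (1 + g / (σ2 + I) * q) := by
    funext q
    rw [hr, logb, mul_div_right_comm]
    ring
  have hf' : f = fun p => (P_C + p) * deriv r p - r p := funext hf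
  subst hf' hr'
  exact tendsto_add_mul_deriv_sub_log_atBot P_C
    (div_pos hc (log_pos one_lt_two)) (by positivity)

theorem stmt_7 (c g σ2 I P_C : ℝ) (hc : 0 < c) (hg : 0 < g) (hσ : 0 < σ2) (hI : 0 ≤ I)
    (hPC : 0 < P_C)
    (r : ℝ → ℝ) (hr : ∀ p, r p = c * Real.logb 2 (1 + g * p / (σ2 + I)))
    (f : ℝ → ℝ) (hf : ∀ p, f p = (P_C + p) * deriv r p - r p) :
    Filter.Tendsto f Filter.atTop Filter.atBot :=
  stmt_7_general c g σ2 I P_C hc hg hσ hI r hr f hf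
end

section
/- There exists a unique p* > 0 satisfying (P_C + p*)·r'(p*) = r(p*), where r(p) = c·log₂(1 + g·p/(σ² + I)). -/
/-!
Write `r p = (c / log 2) · log (1 + a p)` with `a = g / (σ² + I)`. For `p > 0` the equation
`(P_C + p) r'(p) = r(p)` is equivalent to `F(p) = 0`, where
`F(p) = a (P_C + p) / (1 + a p) - log (1 + a p)`.
Since `F'(p) = -a² (P_C + p) / (1 + a p)² < 0`, `F` is strictly decreasing on `[0, ∞)`;
moreover `F(0) = a P_C > 0`, while `F(p) ≤ a P_C + 1 - log (1 + a p)` becomes negative.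
The intermediate value theorem gives exactly one positive zero.
-/

open Real Set

noncomputable def stationaryGap (a P p : ℝ) : ℝ :=
  a * (P + p) / (1 + a * p) - log (1 + a * p)

theorem existsUnique_zero_of_strictAntiOn_Ici {f : ℝ → ℝ} {x₀ b : ℝ}
    (hcont : ContinuousOn f (Ici x₀)) (hanti : StrictAntiOn f (Ici x₀))
    (hx₀ : 0 < f x₀) (hb : x₀ ≤ b) (hfb : f b < 0) :
    ∃! x, x₀ < x ∧ f x = 0 := by
  obtain ⟨x, hx, hfx⟩ : (0 : ℝ) ∈ f '' Ioo x₀ b :=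
    intermediate_value_Ioo' hb (hcont.mono Icc_subset_Ici_self) ⟨hfb, hx₀⟩
  refine ⟨x, ⟨hx.1, hfx⟩, fun y ⟨hy, hfy⟩ => ?_⟩
  exact hanti.injOn (mem_Ici.2 hy.le) (mem_Ici.2 hx.1.le) (hfy.trans hfx.symm)

section stationaryGap

variable {a P p : ℝ}

theorem stationaryGap_zero (a P : ℝ) : stationaryGap a P 0 = a * P := by
  simp [stationaryGap]

theorem hasDerivAt_one_add_mul (a p : ℝ) :
    HasDerivAt (fun q => 1 + a * q) a p := by
  simpa using ((hasDerivAt_id p).const_mul a).const_add 1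

theorem hasDerivAt_stationaryGap (hp : 1 + a * p ≠ 0) :
    HasDerivAt (stationaryGap a P) (-(a ^ 2 * (P + p) / (1 + a * p) ^ 2)) p := by
  have hnum : HasDerivAt (fun q => a * (P + q)) a p := by
    simpa using ((hasDerivAt_id p).const_add P).const_mul a
  refine ((hnum.div (hasDerivAt_one_add_mul a p) hp).sub
    ((hasDerivAt_one_add_mul a p).log hp)).congr_deriv ?_
  field_simp
  ring

theorem stationaryGap_continuousOn (ha : 0 ≤ a) : ContinuousOn (stationaryGap a P) (Ici 0) :=
  fun p hp =>
    have : 0 ≤ p := hp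
    (hasDerivAt_stationaryGap (by positivity)).continuousAt.continuousWithinAt

theorem stationaryGap_strictAntiOn (ha : 0 < a) (hP : 0 ≤ P) :
    StrictAntiOn (stationaryGap a P) (Ici 0) := by
  refine strictAntiOn_of_deriv_neg (convex_Ici 0) (stationaryGap_continuousOn ha.le)
    fun p hp => ?_
  have hp : 0 < p := by rwa [interior_Ici] at hp
  rw [(hasDerivAt_stationaryGap (by positivity)).deriv, neg_lt_zero]
  positivity

theorem exists_stationaryGap_neg (ha : 0 < a) (hP : 0 ≤ P) :
    ∃ b, 0 ≤ b ∧ stationaryGap a P b < 0 := by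
  set b := (exp (a * P + 2) - 1) / a
  have hab : 1 + a * b = exp (a * P + 2) := by
    simp only [b]
    field_simp
    ring
  have hb : 0 ≤ b := div_nonneg (sub_nonneg.2 (one_le_exp (by positivity))) ha.le
  have hfirst : a * (P + b) / (1 + a * b) ≤ a * P + 1 := by
    rw [div_le_iff₀ (by positivity)]
    nlinarith [mul_nonneg (mul_nonneg ha.le ha.le) (mul_nonneg hP hb)]
  refine ⟨b, hb, ?_⟩
  rw [hab] at hfirst
  rw [stationaryGap, hab, log_exp]
  linarith

theorem existsUnique_stationaryGap_eq_zero (ha : 0 < a) (hP : 0 < P) :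
    ∃! p, 0 < p ∧ stationaryGap a P p = 0 := by
  obtain ⟨b, hb, hfb⟩ := exists_stationaryGap_neg ha hP.le
  exact existsUnique_zero_of_strictAntiOn_Ici (stationaryGap_continuousOn ha.le)
    (stationaryGap_strictAntiOn ha hP.le) (by rw [stationaryGap_zero]; positivity) hb hfb

theorem mul_deriv_logb_eq_iff_stationaryGap_eq_zero {c : ℝ} (hc : c ≠ 0)
    (hp : 1 + a * p ≠ 0) :
    (P + p) * deriv (fun q => c * logb 2 (1 + a * q)) p = c * logb 2 (1 + a * p) ↔
      stationaryGap a P p = 0 := by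
  have hderiv :
      HasDerivAt (fun q => c * logb 2 (1 + a * q)) (c * (a / (1 + a * p) / log 2)) p := by
    simpa only [logb] using (((hasDerivAt_one_add_mul a p).log hp).div_const (log 2)).const_mul c
  have hlog2 : log 2 ≠ 0 := (log_pos one_lt_two).ne'
  have hlhs : (P + p) * (c * (a / (1 + a * p) / log 2)) =
      c * (a * (P + p) / (1 + a * p) / log 2) := by
    ring
  rw [hderiv.deriv, hlhs, logb, mul_right_inj' hc, div_left_inj' hlog2,
    stationaryGap, sub_eq_zero]

end stationaryGap

theorem stmt_8 (c g σ2 I P_C : ℝ) (hc : 0 < c) (hg : 0 < g) (hσ : 0 < σ2) (hI : 0 ≤ I)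
    (hPC : 0 < P_C)
    (r : ℝ → ℝ) (hr : ∀ p, r p = c * Real.logb 2 (1 + g * p / (σ2 + I))) :
    ∃! pstar : ℝ, 0 < pstar ∧ (P_C + pstar) * deriv r pstar = r pstar := by
  set a := g / (σ2 + I)
  have ha : 0 < a := by positivity
  obtain rfl : r = fun q => c * logb 2 (1 + a * q) := by
    funext q
    rw [hr, mul_div_right_comm]
  refine (existsUnique_congr fun p => and_congr_right fun hp => ?_).2
    (existsUnique_stationaryGap_eq_zero ha hPC)
  exact mul_deriv_logb_eq_iff_stationaryGap_eq_zero hc.ne' (by positivity)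
end

section
/- Let U(p) = r(p)/(P_C + p) with r(p) = c·log₂(1 + g·p/(σ² + I)). If p* satisfies (P_C + p*)·r'(p*) = r(p*), then U is strictly increasing on [0, p*] and strictly decreasing on [p*, ∞); in particular p* is the unique global maximizer of U over [0, ∞). -/
/-!
The sign of `U'` is the sign of `f(p) = (P_C + p) r'(p) - r(p)`. For any strictly concave
differentiable `r`, `f` is strictly decreasing: the tangent at `y` lies above the chord, so
`r y - r x > r'(y) (y - x)`, whence `f y - f x < (P_C + x) (r'(y) - r'(x)) < 0` for `x < y`.
Hence `f > 0` before its zero `p*` and `f < 0` after it. The rate `c log₂ (1 + a p)` with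
`a = g / (σ² + I) > 0` is strictly concave because its derivative `c a / (log 2 (1 + a p))` decreases.
-/

open Set

section RatioOfConcave

variable {r : ℝ → ℝ} {S : Set ℝ} {c p : ℝ}

theorem StrictConcaveOn.strictAntiOn_add_mul_deriv_sub (hr : StrictConcaveOn ℝ S r)
    (hd : ∀ x ∈ S, DifferentiableAt ℝ r x) (hc : ∀ x ∈ S, 0 ≤ c + x) :
    StrictAntiOn (fun x => (c + x) * deriv r x - r x) S := by
  intro x hx y hy hxy
  have htangent : deriv r y * (y - x) < r y - r x := by
    have := hr.deriv_lt_slope hx hy hxy (hd y hy)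
    rwa [slope_def_field, lt_div_iff₀ (sub_pos.2 hxy)] at this
  have hderiv : deriv r y < deriv r x := hr.strictAntiOn_deriv hd hx hy hxy
  nlinarith [mul_le_mul_of_nonneg_left hderiv.le (hc x hx)]

theorem HasDerivAt.div_const_add {r' : ℝ} (hr : HasDerivAt r r' p) (hp : c + p ≠ 0) :
    HasDerivAt (fun x => r x / (c + x)) (((c + p) * r' - r p) / (c + p) ^ 2) p :=
  (hr.div ((hasDerivAt_id' p).const_add c) hp).congr_deriv (by ring)

variable (hr : StrictConcaveOn ℝ S r) (hd : ∀ x ∈ S, DifferentiableAt ℝ r x)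
  (hc : ∀ x ∈ S, 0 < c + x) (hp : p ∈ S) (heq : (c + p) * deriv r p = r p)
include hr hd hc hp heq

theorem StrictConcaveOn.strictMonoOn_div_const_add :
    StrictMonoOn (fun x => r x / (c + x)) (S ∩ Iic p) := by
  have hf := hr.strictAntiOn_add_mul_deriv_sub hd (fun x hx => (hc x hx).le)
  apply strictMonoOn_of_deriv_pos (hr.1.inter (convex_Iic p))
  · exact fun x hx =>
      ((hd x hx.1).hasDerivAt.div_const_add (hc x hx.1).ne').continuousAt.continuousWithinAt
  · intro x hx
    rw [interior_inter, interior_Iic] at hx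
    have hxS := interior_subset hx.1
    rw [((hd x hxS).hasDerivAt.div_const_add (hc x hxS).ne').deriv]
    have := hf hxS hp hx.2
    simp only [heq, sub_self] at this
    exact div_pos this (pow_pos (hc x hxS) 2)

theorem StrictConcaveOn.strictAntiOn_div_const_add :
    StrictAntiOn (fun x => r x / (c + x)) (S ∩ Ici p) := by
  have hf := hr.strictAntiOn_add_mul_deriv_sub hd (fun x hx => (hc x hx).le)
  apply strictAntiOn_of_deriv_neg (hr.1.inter (convex_Ici p))
  · exact fun x hx =>
      ((hd x hx.1).hasDerivAt.div_const_add (hc x hx.1).ne').continuousAt.continuousWithinAt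
  · intro x hx
    rw [interior_inter, interior_Ici] at hx
    have hxS := interior_subset hx.1
    rw [((hd x hxS).hasDerivAt.div_const_add (hc x hxS).ne').deriv]
    have := hf hp hxS hx.2
    simp only [heq, sub_self] at this
    exact div_neg_of_neg_of_pos this (pow_pos (hc x hxS) 2)

end RatioOfConcave

theorem hasDerivAt_mul_log_one_add_mul (k a : ℝ) {p : ℝ} (hp : 0 < 1 + a * p) :
    HasDerivAt (fun x => k * Real.log (1 + a * x)) (k * a / (1 + a * p)) p := by
  have hlin : HasDerivAt (fun x => 1 + a * x) a p := by
    simpa using ((hasDerivAt_id' p).const_mul a).const_add 1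
  exact ((hlin.log hp.ne').const_mul k).congr_deriv (by ring)

theorem strictConcaveOn_mul_log_one_add_mul {k a : ℝ} (hk : 0 < k) (ha : 0 < a) :
    StrictConcaveOn ℝ (Ici 0) (fun x => k * Real.log (1 + a * x)) := by
  have hpos : ∀ x ∈ Ici (0 : ℝ), 0 < 1 + a * x := fun x hx =>
    add_pos_of_pos_of_nonneg one_pos (mul_nonneg ha.le hx)
  apply StrictAntiOn.strictConcaveOn_of_deriv (convex_Ici 0)
  · exact fun x hx =>
      (hasDerivAt_mul_log_one_add_mul k a (hpos x hx)).continuousAt.continuousWithinAt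
  · rw [interior_Ici]
    intro x hx y hy hxy
    rw [(hasDerivAt_mul_log_one_add_mul k a (hpos x hx.out.le)).deriv,
      (hasDerivAt_mul_log_one_add_mul k a (hpos y hy.out.le)).deriv]
    exact div_lt_div_of_pos_left (mul_pos hk ha) (hpos x hx.out.le) (by gcongr)

theorem stmt_9 (c g σ2 I P_C : ℝ) (hc : 0 < c) (hg : 0 < g) (hσ : 0 < σ2) (hI : 0 ≤ I)
    (hPC : 0 < P_C)
    (r : ℝ → ℝ) (hr : ∀ p, r p = c * Real.logb 2 (1 + g * p / (σ2 + I)))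
    (U : ℝ → ℝ) (hU : ∀ p, U p = r p / (P_C + p))
    (pstar : ℝ) (hp : 0 < pstar)
    (heq : (P_C + pstar) * deriv r pstar = r pstar) :
    StrictMonoOn U (Set.Icc 0 pstar) ∧ StrictAntiOn U (Set.Ici pstar) ∧
    ∀ p ∈ Set.Ici (0:ℝ), p ≠ pstar → U p < U pstar := by
  have hk : 0 < c / Real.log 2 := div_pos hc (Real.log_pos one_lt_two)
  have ha : 0 < g / (σ2 + I) := div_pos hg (add_pos_of_pos_of_nonneg hσ hI)
  have hr' : r = fun x => c / Real.log 2 * Real.log (1 + g / (σ2 + I) * x) :=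
    funext fun p => by rw [hr, Real.logb, div_mul_eq_mul_div g]; ring
  have hconc : StrictConcaveOn ℝ (Ici 0) r := hr' ▸ strictConcaveOn_mul_log_one_add_mul hk ha
  have hd : ∀ x ∈ Ici (0 : ℝ), DifferentiableAt ℝ r x := fun x hx => hr' ▸
    (hasDerivAt_mul_log_one_add_mul _ _
      (add_pos_of_pos_of_nonneg one_pos (mul_nonneg ha.le hx))).differentiableAt
  have hPC' : ∀ x ∈ Ici (0 : ℝ), 0 < P_C + x := fun x hx => add_pos_of_pos_of_nonneg hPC hx
  have hmono : StrictMonoOn U (Icc 0 pstar) := by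
    rw [show U = _ from funext hU, ← Ici_inter_Iic]
    exact hconc.strictMonoOn_div_const_add hd hPC' hp.le heq
  have hanti : StrictAntiOn U (Ici pstar) := by
    rw [show U = _ from funext hU]
    exact (hconc.strictAntiOn_div_const_add hd hPC' hp.le heq).mono
      fun x hx => ⟨hp.le.trans hx, hx⟩
  refine ⟨hmono, hanti, fun p hp0 hne => ?_⟩
  rcases hne.lt_or_gt with h | h
  · exact hmono ⟨hp0, h.le⟩ ⟨hp.le, le_rfl⟩ h
  · exact hanti self_mem_Ici h.le h
end
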